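/- arXiv:1907.06150 — 4 statements merged into one kernel-verified Lean document; each statement's English description precedes it below -/
import Mathlib

section
/- Let H be a complex Hilbert space and T a bounded self-adjoint operator on H. Then the map λ ↦ T ∘ (1 + λ² + T²)⁻¹ from [0, ∞) to B(H) is Bochner integrable with respect to Lebesgue measure, and (2/π) · ∫₀^∞ T ∘ (1 + λ² + T²)⁻¹ dλ = f(T), where f(T) denotes the continuous functional calculus of the function f(x) = x/√(1 + x²) applied to T. -/
/-!
By the functional calculus, `T (1 + λ² + T²)⁻¹ = g_λ(T)` with `g_λ(x) = x / (1 + λ² + x²)`.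
On the compact spectrum of `T`, `|g_λ| ≤ C / (1 + λ²)`, which is integrable in `λ`, so the
integral commutes with the functional calculus and reduces to the scalar identity
`∫₀^∞ x / (a² + λ²) dλ = π x / (2a)` with `a = √(1 + x²)`.
-/

open MeasureTheory

/-- The resolvent `(1 + l² + T²)⁻¹` of a bounded operator `T` on a complex Hilbert
space (via `Ring.inverse`, which gives the honest inverse when it exists). -/
noncomputable def resolvent2 {H : Type*} [NormedAddCommGroup H] [InnerProductSpace ℂ H]
    [CompleteSpace H] (T : H →L[ℂ] H) (l : ℝ) : H →L[ℂ] H :=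
  Ring.inverse (((1 + l ^ 2 : ℝ) : ℂ) • (1 : H →L[ℂ] H) + T ^ 2)

open Set Real

theorem integral_Ioi_inv_sq_add_sq {a : ℝ} (ha : 0 < a) :
    ∫ l in Ioi (0 : ℝ), (a ^ 2 + l ^ 2)⁻¹ = π / 2 / a := by
  have hscale (l : ℝ) : (a ^ 2 + l ^ 2)⁻¹ = a⁻¹ ^ 2 * (1 + (a⁻¹ * l) ^ 2)⁻¹ := by
    field_simp
  simp_rw [hscale]
  rw [integral_const_mul, integral_comp_mul_left_Ioi (fun l => (1 + l ^ 2)⁻¹) 0 (inv_pos.2 ha),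
    mul_zero, integral_Ioi_inv_one_add_sq, arctan_zero, inv_inv, smul_eq_mul]
  field_simp
  ring

theorem integral_Ici_div_one_add_sq_add_sq (x : ℝ) :
    ∫ l in Ici (0 : ℝ), x / (1 + l ^ 2 + x ^ 2) = π / 2 * (x / √(1 + x ^ 2)) := by
  have hroot : 0 < √(1 + x ^ 2) := sqrt_pos.2 (by positivity)
  have hsq : √(1 + x ^ 2) ^ 2 = 1 + x ^ 2 := sq_sqrt (by positivity)
  have hrw (l : ℝ) : x / (1 + l ^ 2 + x ^ 2) = x * (√(1 + x ^ 2) ^ 2 + l ^ 2)⁻¹ := by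
    rw [hsq, div_eq_mul_inv]; ring_nf
  simp_rw [integral_Ici_eq_integral_Ioi, hrw]
  rw [integral_const_mul, integral_Ioi_inv_sq_add_sq hroot]
  ring

theorem IsCompact.exists_div_one_add_sq_add_sq_le {s : Set ℝ} (hs : IsCompact s) :
    ∃ C, ∀ l, ∀ x ∈ s, ‖x / (1 + l ^ 2 + x ^ 2)‖ ≤ C * (1 + l ^ 2)⁻¹ := by
  obtain ⟨C, hC⟩ := hs.isBounded.exists_norm_le
  refine ⟨C, fun l x hx => ?_⟩
  have hden : 0 < 1 + l ^ 2 + x ^ 2 := by positivity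
  rw [norm_div, Real.norm_of_nonneg hden.le, div_eq_mul_inv]
  exact mul_le_mul (hC x hx) (inv_anti₀ (by positivity) (by nlinarith)) (inv_nonneg.2 hden.le)
    ((norm_nonneg x).trans (hC x hx))

theorem continuous_uncurry_div_one_add_sq_add_sq :
    Continuous (Function.uncurry fun l x : ℝ => x / (1 + l ^ 2 + x ^ 2)) :=
  Continuous.div (by fun_prop) (by fun_prop) fun _ => by positivity

theorem continuous_div_sqrt_one_add_sq : Continuous fun x : ℝ => x / √(1 + x ^ 2) :=
  continuous_id.div (by fun_prop) fun _ => (sqrt_pos.2 (by positivity)).ne'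

section CStarAlgebra

variable {A : Type*} [CStarAlgebra A] {a : A}

theorem IsSelfAdjoint.integrableOn_cfc_div_one_add_sq_add_sq (ha : IsSelfAdjoint a) :
    IntegrableOn (fun l : ℝ => cfc (fun x : ℝ => x / (1 + l ^ 2 + x ^ 2)) a) (Ici 0) := by
  obtain ⟨C, hC⟩ :=
    (ContinuousFunctionalCalculus.isCompact_spectrum (R := ℝ) a).exists_div_one_add_sq_add_sq_le
  exact integrableOn_cfc measurableSet_Ici _ (fun l => C * (1 + l ^ 2)⁻¹) a
    continuous_uncurry_div_one_add_sq_add_sq.continuousOn (.of_forall fun l => hC l)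
    (integrable_inv_one_add_sq.const_mul C).restrict.hasFiniteIntegral

theorem IsSelfAdjoint.setIntegral_cfc_div_one_add_sq_add_sq (ha : IsSelfAdjoint a) :
    ∫ l in Ici (0 : ℝ), cfc (fun x : ℝ => x / (1 + l ^ 2 + x ^ 2)) a =
      (π / 2) • cfc (fun x : ℝ => x / √(1 + x ^ 2)) a := by
  obtain ⟨C, hC⟩ :=
    (ContinuousFunctionalCalculus.isCompact_spectrum (R := ℝ) a).exists_div_one_add_sq_add_sq_le
  rw [← cfc_setIntegral measurableSet_Ici _ (fun l => C * (1 + l ^ 2)⁻¹) a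
    continuous_uncurry_div_one_add_sq_add_sq.continuousOn (.of_forall fun l => hC l)
    (integrable_inv_one_add_sq.const_mul C).restrict.hasFiniteIntegral,
    ← cfc_smul _ _ _ continuous_div_sqrt_one_add_sq.continuousOn]
  exact cfc_congr fun x _ => integral_Ici_div_one_add_sq_add_sq x

end CStarAlgebra

section Operator

variable {H : Type*} [NormedAddCommGroup H] [InnerProductSpace ℂ H] [CompleteSpace H]
  {T : H →L[ℂ] H}

theorem IsSelfAdjoint.cfc_one_add_sq_add_sq (hT : IsSelfAdjoint T) (l : ℝ) :
    cfc (fun x : ℝ => 1 + l ^ 2 + x ^ 2) T = ((1 + l ^ 2 : ℝ) : ℂ) • (1 : H →L[ℂ] H) + T ^ 2 := by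
  rw [cfc_const_add _ _ T, cfc_pow_id T 2, Algebra.algebraMap_eq_smul_one, Complex.coe_smul]

theorem IsSelfAdjoint.mul_resolvent2 (hT : IsSelfAdjoint T) (l : ℝ) :
    T * resolvent2 T l = cfc (fun x : ℝ => x / (1 + l ^ 2 + x ^ 2)) T := by
  rw [cfc_map_div _ _ T fun x _ => by positivity, cfc_id' ℝ T, hT.cfc_one_add_sq_add_sq,
    resolvent2]

end Operator

/-- The operator-valued Cauchy integral formula for the bounded transform: for a
bounded self-adjoint operator `T`, the map `l ↦ T ∘ (1 + l² + T²)⁻¹` is Bochner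
integrable on `[0, ∞)` and `(2/π) ∫₀^∞ T (1 + l² + T²)⁻¹ dl = f(T)` where
`f(x) = x / √(1 + x²)` and `f(T)` is the continuous functional calculus. -/
theorem stmt2 {H : Type*} [NormedAddCommGroup H] [InnerProductSpace ℂ H] [CompleteSpace H]
    (T : H →L[ℂ] H) (hT : IsSelfAdjoint T) :
    IntegrableOn (fun l : ℝ => T * resolvent2 T l) (Set.Ici 0) volume ∧
    ((2 / Real.pi : ℝ) : ℂ) • ∫ l in Set.Ici (0 : ℝ), T * resolvent2 T l =
      cfc (fun x : ℝ => x / Real.sqrt (1 + x ^ 2)) T := by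
  simp_rw [hT.mul_resolvent2]
  refine ⟨hT.integrableOn_cfc_div_one_add_sq_add_sq, ?_⟩
  rw [hT.setIntegral_cfc_div_one_add_sq_add_sq, Complex.coe_smul, smul_smul,
    show 2 / π * (π / 2) = 1 by field_simp, one_smul]
end

section
/- Let H be a complex Hilbert space, T a bounded self-adjoint operator on H, and a, χ bounded operators on H. Assume that (i) T∘a − a∘T = χ∘(T∘a − a∘T), (ii) (1 + T²)⁻¹∘χ is a compact operator, and (iii) T∘(1 + T²)⁻¹∘χ is a compact operator. Then f(T)∘a − a∘f(T) is a compact operator, where f(T) is the continuous functional calculus of f(x) = x/√(1 + x²) applied to T. -/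
/-!
The operators whose commutator with `a` is compact form a norm-closed algebra, the essential
commutant of `a`. Writing `R = (1 + T²)⁻¹`, both `[R, a] = R [a, 1 + T²] R` and `[T R, a]` are
built from `R [T, a] = R χ [T, a]`, which is compact, so `R` and `T R` lie in it. The functions
`(1 + x²)⁻¹` and `x (1 + x²)⁻¹` separate the points of `ℝ`, so by Stone–Weierstrass every
continuous function of `T`, in particular `T (1 + T²)^(-1/2)`, lies in this closed algebra.
-/

open scoped Ring

section EssentialCommutant

variable {𝕜 E : Type*} [NontriviallyNormedField 𝕜] [NormedAddCommGroup E] [NormedSpace 𝕜 E]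

def essentialCommutant (a : E →L[𝕜] E) : Subalgebra 𝕜 (E →L[𝕜] E) where
  carrier := {x | IsCompactOperator ⇑(x * a - a * x)}
  mul_mem' {x y} hx hy := by
    have : x * y * a - a * (x * y) = x * (y * a - a * y) + (x * a - a * x) * y := by noncomm_ring
    show IsCompactOperator _
    rw [this]
    exact (hy.clm_comp x).add (hx.comp_clm y)
  add_mem' {x y} hx hy := by
    have : (x + y) * a - a * (x + y) = (x * a - a * x) + (y * a - a * y) := by noncomm_ring
    show IsCompactOperator _
    rw [this]
    exact hx.add hy
  algebraMap_mem' c := by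
    show IsCompactOperator _
    rw [Algebra.commutes, sub_self]
    exact isCompactOperator_zero

theorem mem_essentialCommutant {a x : E →L[𝕜] E} :
    x ∈ essentialCommutant a ↔ IsCompactOperator ⇑(x * a - a * x) :=
  Iff.rfl

theorem isClosed_essentialCommutant [CompleteSpace E] (a : E →L[𝕜] E) :
    IsClosed (essentialCommutant a : Set (E →L[𝕜] E)) :=
  isClosed_setOfPred_isCompactOperator.preimage
    ((continuous_mul_const a).sub (continuous_const_mul a))

end EssentialCommutant

section Ring

theorem Commute.ringInverse_right {M₀ : Type*} [MonoidWithZero M₀] {a b : M₀} (h : Commute a b) :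
    Commute a b⁻¹ʳ := by
  by_cases hb : IsUnit b
  · have h' : Commute a hb.unit := by rwa [hb.unit_spec]
    rw [Ring.inverse_of_isUnit hb]
    exact h'.units_inv_right
  · rw [Ring.inverse_non_unit b hb]
    exact Commute.zero_right a

theorem Ring.inverse_mul_sub_mul_inverse {A : Type*} [Ring A] {u : A} (hu : IsUnit u) (a : A) :
    u⁻¹ʳ * a - a * u⁻¹ʳ = u⁻¹ʳ * (a * u - u * a) * u⁻¹ʳ := by
  rw [mul_sub, sub_mul, ← mul_assoc, ← mul_assoc, Ring.inverse_mul_cancel _ hu, mul_assoc,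
    mul_assoc, Ring.mul_inverse_cancel _ hu, one_mul, mul_one]

theorem commute_ringInverse_one_add_sq {A : Type*} [Ring A] (T : A) : Commute T (1 + T ^ 2)⁻¹ʳ :=
  ((Commute.one_right T).add_right ((Commute.refl T).pow_right 2)).ringInverse_right

end Ring

section OneAddSq

variable {𝕜 E : Type*} [NontriviallyNormedField 𝕜] [NormedAddCommGroup E] [NormedSpace 𝕜 E]
  {T a : E →L[𝕜] E}

theorem ringInverse_one_add_sq_mem_essentialCommutant (hu : IsUnit (1 + T ^ 2))
    (hc : IsCompactOperator ⇑((1 + T ^ 2)⁻¹ʳ * (T * a - a * T))) :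
    (1 + T ^ 2)⁻¹ʳ ∈ essentialCommutant a := by
  rw [mem_essentialCommutant, Ring.inverse_mul_sub_mul_inverse hu]
  have hTR := (commute_ringInverse_one_add_sq T).eq
  set R := (1 + T ^ 2)⁻¹ʳ
  clear_value R
  have : R * (a * (1 + T ^ 2) - (1 + T ^ 2) * a) * R =
      -(T * (R * (T * a - a * T)) * R + R * (T * a - a * T) * T * R) := by
    rw [← mul_assoc T R, hTR]
    noncomm_ring
  rw [this]
  exact ((hc.clm_comp T).comp_clm R).add ((hc.comp_clm T).comp_clm R) |>.neg

theorem mul_ringInverse_one_add_sq_mem_essentialCommutant (hu : IsUnit (1 + T ^ 2))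
    (hc : IsCompactOperator ⇑((1 + T ^ 2)⁻¹ʳ * (T * a - a * T))) :
    T * (1 + T ^ 2)⁻¹ʳ ∈ essentialCommutant a := by
  have hR := ringInverse_one_add_sq_mem_essentialCommutant hu hc
  rw [mem_essentialCommutant] at hR ⊢
  rw [(commute_ringInverse_one_add_sq T).eq]
  set R := (1 + T ^ 2)⁻¹ʳ
  have : R * T * a - a * (R * T) = R * (T * a - a * T) + (R * a - a * R) * T := by noncomm_ring
  rw [this]
  exact hc.add (hR.comp_clm T)

end OneAddSq

theorem continuous_inv_one_add_sq : Continuous fun x : ℝ ↦ (1 + x ^ 2)⁻¹ :=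
  (continuous_const.add (continuous_pow 2)).inv₀ fun x ↦ (by positivity : (1 : ℝ) + x ^ 2 ≠ 0)

theorem injective_inv_one_add_sq_prod_mul :
    Function.Injective fun x : ℝ ↦ ((1 + x ^ 2)⁻¹, x * (1 + x ^ 2)⁻¹) := by
  intro x y h
  obtain ⟨hr, hs⟩ := Prod.mk.inj h
  rw [hr] at hs
  exact mul_right_cancel₀ (by positivity) hs

section CFC

open scoped ContinuousFunctionalCalculus

variable {A : Type*} [Ring A] [StarRing A] [TopologicalSpace A] [Algebra ℝ A]
  [ContinuousFunctionalCalculus ℝ A IsSelfAdjoint] {T : A}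

theorem cfc_mem_of_injOn (hT : IsSelfAdjoint T) {S : Subalgebra ℝ A} (hS : IsClosed (S : Set A))
    {r s : ℝ → ℝ} (hr : ContinuousOn r (spectrum ℝ T)) (hs : ContinuousOn s (spectrum ℝ T))
    (hrS : cfc r T ∈ S) (hsS : cfc s T ∈ S) (hrs : (spectrum ℝ T).InjOn fun x ↦ (r x, s x))
    {f : ℝ → ℝ} (hf : ContinuousOn f (spectrum ℝ T)) : cfc f T ∈ S := by
  let S' := S.comap (cfcHom hT : C(spectrum ℝ T, ℝ) →⋆ₐ[ℝ] A).toAlgHom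
  have hS' : IsClosed (S' : Set C(spectrum ℝ T, ℝ)) := hS.preimage (cfcHom_continuous hT)
  have mem {g : ℝ → ℝ} (hg : ContinuousOn g (spectrum ℝ T)) (hgS : cfc g T ∈ S) :
      (⟨_, hg.domRestrict⟩ : C(spectrum ℝ T, ℝ)) ∈ S' :=
    (cfc_apply g T hT hg ▸ hgS :)
  have hsep : S'.SeparatesPoints := by
    intro x y hxy
    have : r x ≠ r y ∨ s x ≠ s y := by
      by_contra! h
      exact hxy (Subtype.ext (hrs x.2 y.2 (Prod.ext h.1 h.2)))
    rcases this with hr' | hs'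
    · exact ⟨_, ⟨_, mem hr hrS, rfl⟩, hr'⟩
    · exact ⟨_, ⟨_, mem hs hsS, rfl⟩, hs'⟩
  rw [cfc_apply f T hT hf]
  exact Subalgebra.topologicalClosure_minimal le_rfl hS'
    (ContinuousMap.continuousMap_mem_subalgebra_closure_of_separatesPoints S' hsep _)

theorem cfc_one_add_sq (hT : IsSelfAdjoint T) : cfc (fun x : ℝ ↦ 1 + x ^ 2) T = 1 + T ^ 2 := by
  rw [cfc_const_add 1 (fun x : ℝ ↦ x ^ 2) T, cfc_pow_id T 2, map_one]

theorem IsSelfAdjoint.isUnit_one_add_sq (hT : IsSelfAdjoint T) : IsUnit (1 + T ^ 2) :=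
  cfc_one_add_sq hT ▸ (isUnit_cfc_iff (fun x : ℝ ↦ 1 + x ^ 2) T).mpr fun x _ ↦ by positivity

theorem cfc_inv_one_add_sq (hT : IsSelfAdjoint T) :
    cfc (fun x : ℝ ↦ (1 + x ^ 2)⁻¹) T = (1 + T ^ 2)⁻¹ʳ := by
  rw [cfc_inv (fun x : ℝ ↦ 1 + x ^ 2) T (fun x _ ↦ by positivity), cfc_one_add_sq hT]

theorem cfc_mul_inv_one_add_sq (hT : IsSelfAdjoint T) :
    cfc (fun x : ℝ ↦ x * (1 + x ^ 2)⁻¹) T = T * (1 + T ^ 2)⁻¹ʳ := by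
  rw [cfc_mul (fun x : ℝ ↦ x) (fun x : ℝ ↦ (1 + x ^ 2)⁻¹) T
    (hg := continuous_inv_one_add_sq.continuousOn), cfc_id' ℝ T, cfc_inv_one_add_sq hT]

end CFC

theorem stmt6_general {H : Type*} [NormedAddCommGroup H] [InnerProductSpace ℂ H] [CompleteSpace H]
    (T a χ : H →L[ℂ] H) (hT : IsSelfAdjoint T)
    (h1 : T * a - a * T = χ * (T * a - a * T))
    (h2 : IsCompactOperator ⇑(Ring.inverse ((1 : H →L[ℂ] H) + T ^ 2) * χ)) :
    IsCompactOperator ⇑(cfc (fun x : ℝ => x / Real.sqrt (1 + x ^ 2)) T * a -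
      a * cfc (fun x : ℝ => x / Real.sqrt (1 + x ^ 2)) T) := by
  have hu := hT.isUnit_one_add_sq
  have hc : IsCompactOperator ⇑((1 + T ^ 2)⁻¹ʳ * (T * a - a * T)) := by
    rw [h1, ← mul_assoc]
    exact h2.comp_clm _
  have hr := cfc_inv_one_add_sq hT ▸ ringInverse_one_add_sq_mem_essentialCommutant hu hc
  have hs := cfc_mul_inv_one_add_sq hT ▸ mul_ringInverse_one_add_sq_mem_essentialCommutant hu hc
  have hf : Continuous fun x : ℝ => x / Real.sqrt (1 + x ^ 2) :=
    continuous_id.div (by fun_prop) fun x ↦ (Real.sqrt_pos.mpr (by positivity)).ne'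
  exact cfc_mem_of_injOn (S := (essentialCommutant a).restrictScalars ℝ) hT
    (isClosed_essentialCommutant a) continuous_inv_one_add_sq.continuousOn
    (continuous_id.mul continuous_inv_one_add_sq).continuousOn hr hs
    injective_inv_one_add_sq_prod_mul.injOn hf.continuousOn

/-- Abstract form of the compact-commutator argument in the construction of the
transverse Dirac class: if `T` is bounded self-adjoint, `[T, a] = χ [T, a]`,
`(1 + T²)⁻¹ χ` is compact and `T (1 + T²)⁻¹ χ` is compact, then the commutator
`[f(T), a]` is compact, where `f(x) = x / √(1 + x²)` is applied to `T` via the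
continuous functional calculus. -/
theorem stmt6 {H : Type*} [NormedAddCommGroup H] [InnerProductSpace ℂ H] [CompleteSpace H]
    (T a χ : H →L[ℂ] H) (hT : IsSelfAdjoint T)
    (h1 : T * a - a * T = χ * (T * a - a * T))
    (h2 : IsCompactOperator ⇑(Ring.inverse ((1 : H →L[ℂ] H) + T ^ 2) * χ))
    (h3 : IsCompactOperator ⇑(T * Ring.inverse ((1 : H →L[ℂ] H) + T ^ 2) * χ)) :
    IsCompactOperator ⇑(cfc (fun x : ℝ => x / Real.sqrt (1 + x ^ 2)) T * a -
      a * cfc (fun x : ℝ => x / Real.sqrt (1 + x ^ 2)) T) :=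
  stmt6_general T a χ hT h1 h2
end

section
/- Let H be a complex Hilbert space, S and T bounded self-adjoint operators on H, and a, χ bounded operators on H. Set B = S∘a − a∘T, and assume that (i) B = χ∘B, (ii) (1 + S²)⁻¹∘χ is a compact operator, and (iii) S∘(1 + S²)⁻¹∘χ is a compact operator. Then f(S)∘a − a∘f(T) is a compact operator, where f(S), f(T) denote the continuous functional calculus of f(x) = x/√(1 + x²) applied to S and T respectively. -/
/-!
Because `1 + S²` is invertible, `χ = (1 + S²) · ((1 + S²)⁻¹ χ)` is compact, hence so is
`B = χ B`. The pairs `(x, y)` for which `x a - a y` is compact form a subalgebra, by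
`x₁ y₁ a - a x₂ y₂ = x₁ (y₁ a - a y₂) + (x₁ a - a x₂) y₂`; it contains `(S, T)`, hence every
`(p(S), p(T))` with `p` a polynomial. Approximating `f` uniformly by polynomials on `[-M, M]`,
`M = max ‖S‖ ‖T‖`, and using that compact operators form a closed set gives the claim.
-/

open Polynomial Set

section IntertwinersModCompact

variable {𝕜 E : Type*} [NontriviallyNormedField 𝕜] [NormedAddCommGroup E] [NormedSpace 𝕜 E]
  (R : Type*) [CommSemiring R] [Algebra R (E →L[𝕜] E)]

def intertwinersModCompact (a : E →L[𝕜] E) : Subalgebra R ((E →L[𝕜] E) × (E →L[𝕜] E)) where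
  carrier := {x | IsCompactOperator ⇑(x.1 * a - a * x.2)}
  add_mem' {x y} hx hy := by
    show IsCompactOperator ⇑((x.1 + y.1) * a - a * (x.2 + y.2))
    rw [show (x.1 + y.1) * a - a * (x.2 + y.2)
      = (x.1 * a - a * x.2) + (y.1 * a - a * y.2) by noncomm_ring]
    exact hx.add hy
  mul_mem' {x y} hx hy := by
    show IsCompactOperator ⇑(x.1 * y.1 * a - a * (x.2 * y.2))
    rw [show x.1 * y.1 * a - a * (x.2 * y.2)
      = x.1 * (y.1 * a - a * y.2) + (x.1 * a - a * x.2) * y.2 by noncomm_ring]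
    exact (hy.clm_comp x.1).add (hx.comp_clm y.2)
  algebraMap_mem' r := by
    show IsCompactOperator ⇑(algebraMap R _ r * a - a * algebraMap R _ r)
    rw [Algebra.commutes, sub_self]
    exact isCompactOperator_zero

variable {R}

theorem isCompactOperator_aeval_mul_sub_mul_aeval {S T a : E →L[𝕜] E}
    (h : IsCompactOperator ⇑(S * a - a * T)) (p : R[X]) :
    IsCompactOperator ⇑(aeval S p * a - a * aeval T p) := by
  have hp : aeval (S, T) p ∈ intertwinersModCompact R a :=
    Algebra.adjoin_le (singleton_subset_iff.mpr h) (aeval_mem_adjoin_singleton R (S, T))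
  rwa [aeval_prod_apply] at hp

end IntertwinersModCompact

section Approximation

variable {A : Type*} [CStarAlgebra A]

theorem abs_le_norm_of_mem_spectrum {a : A} {x : ℝ} (hx : x ∈ spectrum ℝ a) : |x| ≤ ‖a‖ := by
  cases subsingleton_or_nontrivial A with
  | inl _ => simp [spectrum.of_subsingleton] at hx
  | inr _ => exact spectrum.norm_le_norm_of_mem hx

theorem norm_cfc_sub_aeval_le {a : A} (ha : IsSelfAdjoint a) {φ : ℝ → ℝ} (hφ : Continuous φ)
    {p : ℝ[X]} {M δ : ℝ} (haM : ‖a‖ ≤ M) (hδ : 0 ≤ δ)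
    (hp : ∀ x ∈ Icc (-M) M, |p.eval x - φ x| ≤ δ) :
    ‖cfc φ a - aeval a p‖ ≤ δ := by
  rw [← cfc_polynomial p a, ← cfc_sub φ (eval · p) a]
  refine norm_cfc_le hδ fun x hx => ?_
  rw [Real.norm_eq_abs, abs_sub_comm]
  exact hp x (abs_le.mp ((abs_le_norm_of_mem_spectrum hx).trans haM))

theorem cfc_mul_sub_mul_cfc_mem_of_aeval_mem {C : Set A} (hC : IsClosed C) {S T : A}
    (hS : IsSelfAdjoint S) (hT : IsSelfAdjoint T) (a : A)
    (hpoly : ∀ p : ℝ[X], aeval S p * a - a * aeval T p ∈ C) {φ : ℝ → ℝ} (hφ : Continuous φ) :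
    cfc φ S * a - a * cfc φ T ∈ C := by
  refine hC.closure_subset (Metric.mem_closure_iff.mpr fun ε hε => ?_)
  set M := max ‖S‖ ‖T‖
  set δ := ε / (2 * (‖a‖ + 1))
  have hδ : 0 < δ := by positivity
  obtain ⟨p, hp⟩ := exists_polynomial_near_of_continuousOn (-M) M φ hφ.continuousOn δ hδ
  have hSp := norm_cfc_sub_aeval_le hS hφ (le_max_left _ _) hδ.le fun x hx => (hp x hx).le
  have hTp := norm_cfc_sub_aeval_le hT hφ (le_max_right _ _) hδ.le fun x hx => (hp x hx).le
  refine ⟨_, hpoly p, ?_⟩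
  rw [dist_eq_norm, show cfc φ S * a - a * cfc φ T - (aeval S p * a - a * aeval T p)
    = (cfc φ S - aeval S p) * a - a * (cfc φ T - aeval T p) by noncomm_ring]
  calc _ ≤ ‖cfc φ S - aeval S p‖ * ‖a‖ + ‖a‖ * ‖cfc φ T - aeval T p‖ :=
        (norm_sub_le _ _).trans (add_le_add (norm_mul_le _ _) (norm_mul_le _ _))
    _ ≤ δ * ‖a‖ + ‖a‖ * δ := by gcongr
    _ < ε := by
        have : δ * (2 * (‖a‖ + 1)) = ε := div_mul_cancel₀ _ (by positivity)
        nlinarith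

end Approximation

theorem stmt7_general {H : Type*} [NormedAddCommGroup H] [InnerProductSpace ℂ H] [CompleteSpace H]
    (S T a χ : H →L[ℂ] H) (hS : IsSelfAdjoint S) (hT : IsSelfAdjoint T)
    (h1 : S * a - a * T = χ * (S * a - a * T))
    (h2 : IsCompactOperator ⇑(Ring.inverse ((1 : H →L[ℂ] H) + S ^ 2) * χ)) :
    IsCompactOperator ⇑(cfc (fun x : ℝ => x / Real.sqrt (1 + x ^ 2)) S * a -
      a * cfc (fun x : ℝ => x / Real.sqrt (1 + x ^ 2)) T) := by
  have hχ : IsCompactOperator ⇑χ := by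
    have hu := (isStrictlyPositive_one.add_nonneg hS.sq_nonneg).isUnit
    rw [← one_mul χ, ← Ring.mul_inverse_cancel _ hu, mul_assoc]
    exact h2.clm_comp (1 + S ^ 2)
  have hB : IsCompactOperator ⇑(S * a - a * T) := h1 ▸ hχ.comp_clm _
  have hf : Continuous fun x : ℝ => x / Real.sqrt (1 + x ^ 2) :=
    continuous_id.div (by fun_prop) fun x => Real.sqrt_ne_zero'.mpr (by positivity)
  exact cfc_mul_sub_mul_cfc_mem_of_aeval_mem isClosed_setOfPred_isCompactOperator hS hT a
    (isCompactOperator_aeval_mul_sub_mul_aeval hB) hf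

/-- Abstract form of the `F`-connection verification: if `S`, `T` are bounded
self-adjoint operators, `B = S a − a T` satisfies `B = χ B`, `(1 + S²)⁻¹ χ` is
compact and `S (1 + S²)⁻¹ χ` is compact, then `f(S) a − a f(T)` is compact, where
`f(x) = x / √(1 + x²)` is applied via the continuous functional calculus. -/
theorem stmt7 {H : Type*} [NormedAddCommGroup H] [InnerProductSpace ℂ H] [CompleteSpace H]
    (S T a χ : H →L[ℂ] H) (hS : IsSelfAdjoint S) (hT : IsSelfAdjoint T)
    (h1 : S * a - a * T = χ * (S * a - a * T))
    (h2 : IsCompactOperator ⇑(Ring.inverse ((1 : H →L[ℂ] H) + S ^ 2) * χ))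
    (h3 : IsCompactOperator ⇑(S * Ring.inverse ((1 : H →L[ℂ] H) + S ^ 2) * χ)) :
    IsCompactOperator ⇑(cfc (fun x : ℝ => x / Real.sqrt (1 + x ^ 2)) S * a -
      a * cfc (fun x : ℝ => x / Real.sqrt (1 + x ^ 2)) T) :=
  stmt7_general S T a χ hS hT h1 h2
end

section
/- Let H be a complex Hilbert space, ι an index type, (f_i)_{i ∈ ι} a family of bounded self-adjoint operators on H such that for every u ∈ H the family (‖f_i u‖²)_{i ∈ ι} is summable with sum ‖u‖², and (T_i)_{i ∈ ι} a family of bounded operators on H with ‖T_i‖ ≤ C for all i, where C ≥ 0. Then for every u ∈ H the family (f_i(T_i(f_i u)))_{i ∈ ι} is summable in H, and the map sending u to its sum is a bounded linear operator on H of operator norm at most C. -/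
/-!
Pair `∑ i ∈ s, fᵢ Tᵢ fᵢ u` with a test vector `v` and move `fᵢ` across by self-adjointness: the
result is `∑ i ∈ s, ⟪Tᵢ fᵢ u, fᵢ v⟫`, which Cauchy–Schwarz bounds by
`C (∑ i ∈ s, ‖fᵢ u‖²)^{1/2} ‖v‖`. Since the tails of `∑ ‖fᵢ u‖²` are small, the partial sums are
Cauchy, and the same estimate with `∑ ‖fᵢ u‖² = ‖u‖²` bounds the limit operator by `C`.
-/

open scoped InnerProductSpace

section InnerProductSpace

variable {𝕜 H ι : Type*} [RCLike 𝕜] [NormedAddCommGroup H] [InnerProductSpace 𝕜 H]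

theorem norm_le_of_forall_norm_inner_le {w : H} {M : ℝ} (hM : 0 ≤ M)
    (h : ∀ v, ‖⟪w, v⟫_𝕜‖ ≤ M * ‖v‖) : ‖w‖ ≤ M := by
  rw [← innerSL_apply_norm 𝕜 w]
  exact ContinuousLinearMap.opNorm_le_bound _ hM h

theorem norm_sum_inner_le_sqrt_mul_sqrt (s : Finset ι) (x y : ι → H) :
    ‖∑ i ∈ s, ⟪x i, y i⟫_𝕜‖ ≤ √(∑ i ∈ s, ‖x i‖ ^ 2) * √(∑ i ∈ s, ‖y i‖ ^ 2) :=
  calc ‖∑ i ∈ s, ⟪x i, y i⟫_𝕜‖ ≤ ∑ i ∈ s, ‖x i‖ * ‖y i‖ :=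
        (norm_sum_le _ _).trans (Finset.sum_le_sum fun _ _ => norm_inner_le_norm _ _)
    _ ≤ √(∑ i ∈ s, ‖x i‖ ^ 2) * √(∑ i ∈ s, ‖y i‖ ^ 2) := Real.sum_mul_le_sqrt_mul_sqrt _ _ _

theorem norm_sum_sandwich_le (f T : ι → H →L[𝕜] H) (hf : ∀ i, (f i : H →ₗ[𝕜] H).IsSymmetric)
    {C : ℝ} (hC : 0 ≤ C) (hT : ∀ i, ‖T i‖ ≤ C) (s : Finset ι)
    (hs : ∀ v, ∑ i ∈ s, ‖f i v‖ ^ 2 ≤ ‖v‖ ^ 2) (u : H) :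
    ‖∑ i ∈ s, f i (T i (f i u))‖ ≤ C * √(∑ i ∈ s, ‖f i u‖ ^ 2) := by
  have hTf : √(∑ i ∈ s, ‖T i (f i u)‖ ^ 2) ≤ C * √(∑ i ∈ s, ‖f i u‖ ^ 2) := by
    rw [← Real.sqrt_sq hC, ← Real.sqrt_mul (sq_nonneg C), Finset.mul_sum]
    gcongr with i
    rw [← mul_pow]
    gcongr
    exact (T i).le_of_opNorm_le (hT i) _
  refine norm_le_of_forall_norm_inner_le (𝕜 := 𝕜) (by positivity) fun v => ?_
  calc ‖⟪∑ i ∈ s, f i (T i (f i u)), v⟫_𝕜‖ = ‖∑ i ∈ s, ⟪T i (f i u), f i v⟫_𝕜‖ := by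
        rw [sum_inner]
        exact congrArg norm (Finset.sum_congr rfl fun i _ => hf i _ v)
    _ ≤ √(∑ i ∈ s, ‖T i (f i u)‖ ^ 2) * √(∑ i ∈ s, ‖f i v‖ ^ 2) :=
        norm_sum_inner_le_sqrt_mul_sqrt _ _ _
    _ ≤ C * √(∑ i ∈ s, ‖f i u‖ ^ 2) * ‖v‖ := by
        gcongr
        exact (Real.sqrt_le_left (norm_nonneg v)).mpr (hs v)

end InnerProductSpace

theorem summable_of_norm_sum_le_mul_sqrt {ι E : Type*} [SeminormedAddCommGroup E] [CompleteSpace E]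
    {a : ι → E} {b : ι → ℝ} (hb : Summable b) {C : ℝ} (hC : 0 ≤ C)
    (h : ∀ s : Finset ι, ‖∑ i ∈ s, a i‖ ≤ C * √(∑ i ∈ s, b i)) : Summable a := by
  rw [summable_iff_vanishing_norm] at hb ⊢
  intro ε hε
  obtain ⟨s, hs⟩ := hb ((ε / (C + 1)) ^ 2) (by positivity)
  refine ⟨s, fun t ht => (h t).trans_lt ?_⟩
  have htail : √(∑ i ∈ t, b i) < ε / (C + 1) :=
    (Real.sqrt_lt' (by positivity)).mpr ((le_abs_self _).trans_lt (hs t ht))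
  calc C * √(∑ i ∈ t, b i) ≤ (C + 1) * √(∑ i ∈ t, b i) := by gcongr; linarith
    _ < (C + 1) * (ε / (C + 1)) := by gcongr
    _ = ε := mul_div_cancel₀ _ (by positivity)

theorem ContinuousLinearMap.exists_hasSum_apply_of_norm_sum_le {𝕜 E F ι : Type*}
    [NontriviallyNormedField 𝕜] [SeminormedAddCommGroup E] [NormedAddCommGroup F]
    [NormedSpace 𝕜 E] [NormedSpace 𝕜 F] (A : ι → E →L[𝕜] F) (hA : ∀ u, Summable fun i => A i u)
    {C : ℝ} (hC : 0 ≤ C) (hbound : ∀ u (s : Finset ι), ‖∑ i ∈ s, A i u‖ ≤ C * ‖u‖) :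
    ∃ B : E →L[𝕜] F, (∀ u, HasSum (fun i => A i u) (B u)) ∧ ‖B‖ ≤ C := by
  let B : E →ₗ[𝕜] F :=
    { toFun u := ∑' i, A i u
      map_add' u v := by simp only [map_add, (hA u).tsum_add (hA v)]
      map_smul' c u := by simp only [map_smul, (hA u).tsum_const_smul c, RingHom.id_apply] }
  have hB : ∀ u, ‖B u‖ ≤ C * ‖u‖ := fun u => le_of_tendsto' (hA u).hasSum.norm (hbound u)
  exact ⟨B.mkContinuous C hB, fun u => (hA u).hasSum, B.mkContinuous_norm_le hC hB⟩

/-- Abstract convergence principle for `F = Σᵢ fᵢ Tᵢ fᵢ`: if `(fᵢ)` is a family of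
bounded self-adjoint operators with `Σᵢ ‖fᵢ u‖² = ‖u‖²` for every `u`, and `(Tᵢ)`
is a family of bounded operators with `‖Tᵢ‖ ≤ C`, then for every `u` the family
`(fᵢ (Tᵢ (fᵢ u)))` is summable, and `u ↦ Σᵢ fᵢ (Tᵢ (fᵢ u))` is a bounded linear
operator of norm at most `C`. -/
theorem stmt8 {H : Type*} [NormedAddCommGroup H] [InnerProductSpace ℂ H] [CompleteSpace H]
    {ι : Type*} (f : ι → H →L[ℂ] H) (hf_sa : ∀ i, IsSelfAdjoint (f i))
    (hf_sum : ∀ u : H, HasSum (fun i => ‖f i u‖ ^ 2) (‖u‖ ^ 2))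
    (T : ι → H →L[ℂ] H) (C : ℝ) (hC : 0 ≤ C) (hT : ∀ i, ‖T i‖ ≤ C) :
    (∀ u : H, Summable (fun i => f i (T i (f i u)))) ∧
    ∃ F : H →L[ℂ] H, (∀ u : H, HasSum (fun i => f i (T i (f i u))) (F u)) ∧ ‖F‖ ≤ C := by
  have hf_le (s : Finset ι) (v : H) : ∑ i ∈ s, ‖f i v‖ ^ 2 ≤ ‖v‖ ^ 2 :=
    sum_le_hasSum s (fun _ _ => by positivity) (hf_sum v)
  have hpartial (u : H) (s : Finset ι) :=
    norm_sum_sandwich_le f T (fun i => (hf_sa i).isSymmetric) hC hT s (hf_le s) u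
  have hsum (u : H) : Summable fun i => f i (T i (f i u)) :=
    summable_of_norm_sum_le_mul_sqrt (hf_sum u).summable hC (hpartial u)
  refine ⟨hsum, ContinuousLinearMap.exists_hasSum_apply_of_norm_sum_le (fun i => f i ∘L T i ∘L f i)
    hsum hC fun u s => ?_⟩
  calc ‖∑ i ∈ s, f i (T i (f i u))‖ ≤ C * √(∑ i ∈ s, ‖f i u‖ ^ 2) := hpartial u s
    _ ≤ C * ‖u‖ := by
        gcongr
        exact (Real.sqrt_le_left (norm_nonneg u)).mpr (hf_le s u)
end
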